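/- Let u be a word on {x,y}, μ(u)=[[p,q],[r,s]] with μ(x)=[[1,1],[0,1]], μ(y)=[[1,0],[1,1]], and let v = u·y^l·x for some l ∈ ℕ. Set A = μ(ᵗu·yy·u)_{22}, B = μ(ᵗu·yy·v)_{22}, C = μ(ᵗv·yy·u)_{22}, D = μ(ᵗv·yy·v)_{22}, where ᵗw denotes reversal composed with exchanging x and y. Then B − C = 2 and (A + D)^2 = (D − A)^2 + (B + C)^2, i.e. (A+D, D−A, B+C) is a Pythagorean triple. -/

import Mathlib

/-- The matrix `μ(x) = [[1,1],[0,1]]`. -/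
def muX : Matrix (Fin 2) (Fin 2) ℤ := !![1, 1; 0, 1]

/-- The matrix `μ(y) = [[1,0],[1,1]]`. -/
def muY : Matrix (Fin 2) (Fin 2) ℤ := !![1, 0; 1, 1]

/-- Words on the alphabet `{x, y}` are lists of booleans: `true` codes the
letter `x` and `false` codes the letter `y`. `mu` is the monoid homomorphism
sending a word to the corresponding product of the matrices `μ(x)`, `μ(y)`. -/
def mu (w : List Bool) : Matrix (Fin 2) (Fin 2) ℤ :=
  (w.map (fun b => if b then muX else muY)).prod

/-- The transpose of a word: reverse it and exchange the letters `x` and `y`. -/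
def wordTranspose (w : List Bool) : List Bool := w.reverse.map (fun b => !b)

/-!
Write `T(w) = μ(w)₁₂ + μ(w)₂₂` for the sum of the second column of `μ(w)`. Since `μ(yy) = [[1,0],[2,1]]`
and `μ(ᵗa) = μ(a)ᵀ`, the entry `μ(ᵗa·yy·b)₂₂` is a bilinear form in the second columns of `μ(a)` and
`μ(b)`: its symmetric part is `T(a) T(b)` and its antisymmetric part is the `2 × 2` determinant
`μ(a)₂₂ μ(b)₁₂ - μ(a)₁₂ μ(b)₂₂`. For `v = u·yˡ·x` the second column of `μ(v)` is the first column of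
`μ(u)` plus `l + 1` times its second column, so that determinant is `det μ(u) = 1`. Hence, with
`T = T(u)` and `U = T(v)`, we get `A = T²`, `D = U²`, `B = TU + 1`, `C = TU - 1`, and the claim is
Euclid's identity `(T² + U²)² = (U² - T²)² + (2TU)²`.
-/

open Matrix

lemma mu_append (a b : List Bool) : mu (a ++ b) = mu a * mu b := by
  simp [mu]

lemma mu_wordTranspose (w : List Bool) : mu (wordTranspose w) = (mu w)ᵀ := by
  have h (b : Bool) : (if !b then muX else muY) = (if b then muX else muY)ᵀ := by
    cases b <;> ext i j <;> fin_cases i <;> fin_cases j <;> rfl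
  simp only [mu, wordTranspose, transpose_list_prod, List.map_map, List.map_reverse]
  congr 2
  exact List.map_congr_left fun b _ => h b

lemma det_mu (w : List Bool) : (mu w).det = 1 := by
  induction w with
  | nil => simp [mu]
  | cons b w ih =>
    rw [show b :: w = [b] ++ w from rfl, mu_append, det_mul, ih]
    cases b <;> simp [mu, muX, muY, det_fin_two_of]

lemma mu_replicate_false (n : ℕ) : mu (List.replicate n false) = !![1, 0; (n : ℤ), 1] := by
  induction n with
  | zero => ext i j; fin_cases i <;> fin_cases j <;> rfl
  | succ n ih =>
    rw [List.replicate_succ', mu_append, ih]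
    ext i j; fin_cases i <;> fin_cases j <;> simp [mu, muY]

lemma mu_append_replicate_false_true (u : List Bool) (l : ℕ) :
    mu (u ++ List.replicate l false ++ [true]) = mu u * !![1, 1; (l : ℤ), l + 1] := by
  rw [mu_append, mu_append, mu_replicate_false, Matrix.mul_assoc]
  congr 1
  ext i j; fin_cases i <;> fin_cases j <;> simp [mu, muX]

lemma mu_wordTranspose_yy_apply (a b : List Bool) :
    mu (wordTranspose a ++ [false, false] ++ b) 1 1 =
      (mu a 0 1 + mu a 1 1) * (mu b 0 1 + mu b 1 1) + (mu a 1 1 * mu b 0 1 - mu a 0 1 * mu b 1 1) := by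
  have hyy : mu [false, false] = !![1, 0; 2, 1] := mu_replicate_false 2
  simp only [mu_append, mu_wordTranspose, hyy, mul_apply, Fin.sum_univ_two, transpose_apply, of_apply,
    cons_val', cons_val_zero, cons_val_one, cons_val_fin_one]
  ring

lemma mu_append_replicate_false_true_cross (u : List Bool) (l : ℕ) :
    mu u 1 1 * mu (u ++ List.replicate l false ++ [true]) 0 1 -
      mu u 0 1 * mu (u ++ List.replicate l false ++ [true]) 1 1 = 1 := by
  have hdet := det_mu u
  rw [det_fin_two] at hdet
  simp only [mu_append_replicate_false_true, mul_apply, Fin.sum_univ_two, of_apply, cons_val',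
    cons_val_zero, cons_val_one, cons_val_fin_one]
  linear_combination hdet

/-- Pythagorean triples in SL₂-tilings with frontier `ᵗs·yy·s`: with
`v = u·yˡ·x`, `A = μ(ᵗu·yy·u)₂₂`, `B = μ(ᵗu·yy·v)₂₂`, `C = μ(ᵗv·yy·u)₂₂`,
`D = μ(ᵗv·yy·v)₂₂`, one has `B − C = 2` and
`(A+D)² = (D−A)² + (B+C)²`. -/
theorem tiling_pythagorean_triple (u : List Bool) (l : ℕ) :
    let v := u ++ List.replicate l false ++ [true]
    let A := mu (wordTranspose u ++ [false, false] ++ u) 1 1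
    let B := mu (wordTranspose u ++ [false, false] ++ v) 1 1
    let C := mu (wordTranspose v ++ [false, false] ++ u) 1 1
    let D := mu (wordTranspose v ++ [false, false] ++ v) 1 1
    B - C = 2 ∧ (A + D) ^ 2 = (D - A) ^ 2 + (B + C) ^ 2 := by
  intro v A B C D
  have hcross := mu_append_replicate_false_true_cross u l
  set T := mu u 0 1 + mu u 1 1
  set U := mu v 0 1 + mu v 1 1
  have hA : A = T ^ 2 := by simp only [A, mu_wordTranspose_yy_apply]; ring
  have hD : D = U ^ 2 := by simp only [D, mu_wordTranspose_yy_apply]; ring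
  have hB : B = T * U + 1 := by simp only [B, mu_wordTranspose_yy_apply]; linear_combination hcross
  have hC : C = T * U - 1 := by simp only [C, mu_wordTranspose_yy_apply]; linear_combination -hcross
  rw [hA, hB, hC, hD]
  constructor <;> ring
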